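/- arXiv:1602.04241 — 4 statements merged into one kernel-verified Lean document; each statement's English description precedes it below -/
import Mathlib

section
/- Let Γ be a discrete abelian group and E₁, E₂ ⊆ Γ subsets such that the closures of ι(E₁) and ι(E₂) in 𝕋^{Hom(Γ,𝕋)} (with ι the evaluation embedding) have a common point. Then there is no function φ : Γ → ℂ which is a uniform limit on Γ of finite ℂ-linear combinations of homomorphisms Γ → 𝕋 and which satisfies φ ≡ 1 on E₁ and φ ≡ 0 on E₂. -/
/-!
A trigonometric polynomial `∑ aᵢ χᵢ` on `Γ` is the restriction, along the evaluation map
`γ ↦ (χ ↦ χ γ)`, of the continuous function `q ↦ ∑ aᵢ q(χᵢ)` on `𝕋^{Hom(Γ, 𝕋)}`. If `φ` is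
`1/4`-close to it, this extension is within `1/4` of `1` on the closure of `ι(E₁)` and within
`1/4` of `0` on the closure of `ι(E₂)`, which is impossible at a common point.
-/

open Metric

def trigPolyExtension {A : Type*} {n : ℕ} (a : Fin n → ℂ) (x : Fin n → A) (q : A → Circle) : ℂ :=
  ∑ i, a i * (q (x i) : ℂ)

theorem continuous_trigPolyExtension {A : Type*} {n : ℕ} (a : Fin n → ℂ) (x : Fin n → A) :
    Continuous (trigPolyExtension a x) :=
  continuous_finsetSum _ fun i _ =>
    continuous_const.mul (continuous_subtype_val.comp (continuous_apply (x i)))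

theorem dist_le_of_mem_closure_image {α X Y : Type*} [TopologicalSpace X] [PseudoMetricSpace Y]
    {g : X → Y} (hg : Continuous g) {ι : α → X} {s : Set α} {z : Y} {ε : ℝ}
    (h : ∀ a ∈ s, dist (g (ι a)) z ≤ ε) {p : X} (hp : p ∈ closure (ι '' s)) :
    dist (g p) z ≤ ε :=
  isClosed_closedBall.closure_subset <| map_mem_closure hg hp <| by
    rintro _ ⟨a, ha, rfl⟩
    exact h a ha

theorem stmt3 {Γ : Type*} [AddCommGroup Γ] (E₁ E₂ : Set Γ)
    (h : ∃ p : AddChar Γ Circle → Circle,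
      p ∈ closure ((fun γ (c : AddChar Γ Circle) => c γ) '' E₁) ∧
      p ∈ closure ((fun γ (c : AddChar Γ Circle) => c γ) '' E₂)) :
    ¬ ∃ φ : Γ → ℂ,
      (∀ ε > (0 : ℝ), ∃ (n : ℕ) (a : Fin n → ℂ) (c : Fin n → AddChar Γ Circle),
        ∀ γ, ‖φ γ - ∑ i, a i * (c i γ : ℂ)‖ ≤ ε) ∧
      (∀ γ ∈ E₁, φ γ = 1) ∧ (∀ γ ∈ E₂, φ γ = 0) := by
  rintro ⟨φ, happrox, h₁, h₀⟩
  obtain ⟨p, hp₁, hp₂⟩ := h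
  obtain ⟨n, a, c, hP⟩ := happrox (1 / 4) (by norm_num)
  have hF := continuous_trigPolyExtension a c
  have close_on : ∀ (E : Set Γ) (z : ℂ), (∀ γ ∈ E, φ γ = z) →
      ∀ γ ∈ E, dist (trigPolyExtension a c fun χ => χ γ) z ≤ 1 / 4 := by
    intro E z hz γ hγ
    rw [dist_comm, ← hz γ hγ, dist_eq_norm]
    exact hP γ
  have near_one := dist_le_of_mem_closure_image hF (close_on E₁ 1 h₁) hp₁
  have near_zero := dist_le_of_mem_closure_image hF (close_on E₂ 0 h₀) hp₂
  have dist_one_zero : dist (1 : ℂ) 0 = 1 := by simp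
  linarith [dist_triangle_left (1 : ℂ) 0 (trigPolyExtension a c p)]
end

section
/- Let q > 2 be real and let E = {n_j}_{j≥1} ⊆ ℕ be a Hadamard sequence with ratio at least q, i.e., n_{j+1}/n_j ≥ q for all j. Then for every φ : E → 𝕋 there exists x ∈ ℝ such that |φ(n_j) − e^{2πi n_j x}| ≤ |e^{iπ/(q−1)} − 1| for all j; i.e., E is a weak ε-Kronecker subset of ℤ with ε = |e^{iπ/(q−1)} − 1|. -/
/-!
Write `φ j = exp (2πiθⱼ)` and put `δ = 1 / (2(q - 1)) < 1/2`. Since `|exp (2πit) - 1| = 2|sin πt|`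
increases with `|t| ≤ 1/2`, it suffices to find `x` with `nⱼx` within `δ` of `θⱼ + ℤ` for all `j`.
For each `j` such `x` fill intervals of length `2δ/nⱼ` repeating with period `1/nⱼ`. The ratio
bound `nⱼ₊₁ ≥ q nⱼ` says exactly `2δ/nⱼ ≥ 2δ/nⱼ₊₁ + 1/nⱼ₊₁`, so each of these intervals for `j`
contains one for `j + 1`; any point of the resulting nested sequence of intervals works.
-/

open Complex Set
open scoped Real

lemma norm_exp_I_mul_ofReal_sub_one_le_of_abs_le {s t : ℝ} (hst : |s| ≤ t) (ht : t ≤ π) :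
    ‖exp (I * s) - 1‖ ≤ ‖exp (I * t) - 1‖ := by
  rw [norm_exp_I_mul_ofReal_sub_one, norm_exp_I_mul_ofReal_sub_one, norm_mul, norm_mul]
  gcongr
  rw [Real.norm_eq_abs, Real.norm_eq_abs, Real.abs_sin_eq_sin_abs_of_abs_le_pi, abs_div, abs_two]
  · refine (Real.sin_le_sin_of_le_of_le_pi_div_two ?_ (by linarith) (by linarith)).trans
      (le_abs_self _)
    linarith [abs_nonneg s, Real.pi_pos]
  · rw [abs_div, abs_two]
    linarith [abs_nonneg s, Real.pi_pos]

lemma norm_exp_two_pi_I_mul_sub_exp_le {a b δ : ℝ} {k : ℤ} (h : |b - a - k| ≤ δ)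
    (hδ : δ ≤ 1 / 2) :
    ‖exp (2 * π * I * a) - exp (2 * π * I * b)‖ ≤
      ‖exp (2 * π * I * δ) - 1‖ := by
  have hfactor : exp (2 * π * I * a) - exp (2 * π * I * b) =
      exp (↑(2 * π * a) * I) * (1 - exp (I * ↑(2 * π * (b - a - k)))) := by
    rw [mul_sub, mul_one, ← exp_add]
    have hb : 2 * π * I * b =
        ↑(2 * π * a) * I + I * ↑(2 * π * (b - a - k)) + k * (2 * π * I) := by
      push_cast
      ring
    rw [hb, exp_add _ (k * _), exp_int_mul_two_pi_mul_I, mul_one]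
    push_cast
    ring_nf
  have hδ' : exp (2 * π * I * δ) = exp (I * ↑(2 * π * δ)) := by
    push_cast
    ring_nf
  rw [hfactor, hδ', norm_mul, norm_exp_ofReal_mul_I, one_mul, norm_sub_rev]
  refine norm_exp_I_mul_ofReal_sub_one_le_of_abs_le ?_ (by nlinarith [Real.pi_pos])
  rw [abs_mul, abs_of_pos Real.two_pi_pos]
  exact mul_le_mul_of_nonneg_left h Real.two_pi_pos.le

lemma exists_int_Icc_subset_Icc {δ N N' : ℝ} (hN : 0 < N) (hN' : 0 < N')
    (hgap : (1 + 2 * δ) * N ≤ 2 * δ * N') (θ c : ℝ) :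
    ∃ k : ℤ, Icc ((θ + k - δ) / N') ((θ + k + δ) / N') ⊆ Icc ((c - δ) / N) ((c + δ) / N) := by
  set m := (c - δ) * N' / N - θ + δ
  have hm : (c - δ) * N' = (m + θ - δ) * N := by simp only [m]; field_simp; ring
  have hceil : m ≤ ⌈m⌉ ∧ (⌈m⌉ : ℝ) < m + 1 := ⟨Int.le_ceil m, Int.ceil_lt_add_one m⟩
  refine ⟨⌈m⌉, Icc_subset_Icc ?_ ?_⟩
  · rw [div_le_div_iff₀ hN hN']
    nlinarith
  · rw [div_le_div_iff₀ hN' hN]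
    nlinarith

theorem exists_forall_abs_mul_sub_int_le {δ : ℝ} (hδ : 0 ≤ δ) {N : ℕ → ℝ} (hN : ∀ j, 0 < N j)
    (hgap : ∀ j, (1 + 2 * δ) * N j ≤ 2 * δ * N (j + 1)) (θ : ℕ → ℝ) :
    ∃ x : ℝ, ∀ j, ∃ k : ℤ, |N j * x - θ j - k| ≤ δ := by
  choose next hnext using fun j ↦
    exists_int_Icc_subset_Icc (hN j) (hN (j + 1)) (hgap j) (θ (j + 1))
  obtain ⟨k, hk⟩ : ∃ k : ℕ → ℤ, ∀ j, k (j + 1) = next j (θ j + k j) :=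
    ⟨fun j ↦ Nat.rec 0 (fun j kj ↦ next j (θ j + kj)) j, fun _ ↦ rfl⟩
  have hnested : Antitone fun j ↦ Icc ((θ j + k j - δ) / N j) ((θ j + k j + δ) / N j) := by
    refine antitone_nat_of_succ_le fun j ↦ ?_
    rw [hk]
    exact hnext j _
  obtain ⟨x, hx⟩ : ∃ x, x ∈ ⋂ j, Icc ((θ j + k j - δ) / N j) ((θ j + k j + δ) / N j) :=
    ⟨_, ciSup_mem_iInter_Icc_of_antitone_Icc hnested fun j ↦
      div_le_div_of_nonneg_right (by linarith) (hN j).le⟩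
  refine ⟨x, fun j ↦ ⟨k j, ?_⟩⟩
  obtain ⟨hlo, hhi⟩ := mem_iInter.1 hx j
  rw [le_div_iff₀' (hN j)] at hhi
  rw [div_le_iff₀' (hN j)] at hlo
  rw [abs_le]
  constructor <;> linarith

theorem stmt9 (q : ℝ) (hq : 2 < q) (n : ℕ → ℕ)
    (hpos : ∀ j, 0 < n j) (hratio : ∀ j, q ≤ (n (j + 1) : ℝ) / (n j : ℝ))
    (φ : ℕ → ℂ) (hφ : ∀ j, ‖φ j‖ = 1) :
    ∃ x : ℝ, ∀ j,
      ‖φ j - Complex.exp (2 * Real.pi * Complex.I * (n j : ℂ) * (x : ℂ))‖ ≤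
        ‖Complex.exp (Real.pi * Complex.I / ((q : ℂ) - 1)) - 1‖ := by
  have hn : ∀ j, (0 : ℝ) < n j := fun j ↦ mod_cast hpos j
  set δ := 1 / (2 * (q - 1)) with hδ
  have hq1 : 0 < q - 1 := by linarith
  have hgap : ∀ j, (1 + 2 * δ) * n j ≤ 2 * δ * n (j + 1) := fun j ↦ by
    have := (le_div_iff₀ (hn j)).1 (hratio j)
    rw [hδ]
    field_simp
    linarith
  obtain ⟨x, hx⟩ := exists_forall_abs_mul_sub_int_le (by positivity) hn hgap
    fun j ↦ arg (φ j) / (2 * π)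
  refine ⟨x, fun j ↦ ?_⟩
  obtain ⟨k, hk⟩ := hx j
  have hφj : exp (2 * π * I * ↑(arg (φ j) / (2 * π))) = φ j := by
    conv_rhs => rw [← norm_mul_exp_arg_mul_I (φ j), hφ j]
    push_cast
    field_simp
  have hrhs : π * I / ((q : ℂ) - 1) = 2 * π * I * δ := by
    rw [hδ]
    push_cast
    field_simp
  rw [← hφj, hrhs, mul_assoc _ (n j : ℂ), ← ofReal_natCast, ← ofReal_mul]
  refine norm_exp_two_pi_I_mul_sub_exp_le hk ?_
  rw [hδ, div_le_div_iff₀ (by positivity) two_pos]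
  linarith
end

section
/- Let q > 2 be an integer and let (λ_n)_{n≥1} and (χ_n)_{n≥1} be sequences of rational numbers. For x ∈ ℚ in reduced form s/t (gcd(s,t)=1, t>0) write D(x) = t. Define B₀ = D(χ₁) and B_n = 2·max{D(λ_i), D(χ_j) : 1 ≤ i ≤ n, 1 ≤ j ≤ n+1} for n ≥ 1, and assume D(λ_{n+1}) > q·B_n! for all n ≥ 0. Then for every sequence (t_n) in 𝕋 there exists a group homomorphism g : (ℚ,+) → 𝕋 with g(ℤ) = {1} such that |g(λ_n + χ_n) − t_n| < |e^{iπ/q} − 1| for all n ≥ 1. In particular {λ_n + χ_n} is an ε-Kronecker subset of ℚ for ε = |e^{iπ/q} − 1| ≥ π-over-q chord length. -/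
/-!
A character of `ℚ` trivial on `ℤ` is `x ↦ 𝐞 (x * a)` for a profinite integer `a`, realised here as
integers `aₙ` with `(Bₙ)! ∣ aₙ₊₁ - aₙ`. Passing from `aₙ` to `aₙ + (Bₙ)! * k` does not change the
value at any `x` whose denominator divides `(Bₙ)!`, such as `χₙ₊₁` and the earlier `λᵢ + χᵢ`, but
multiplies the value at `λₙ₊₁ + χₙ₊₁` by `𝐞 (k * r)`, `r = λₙ₊₁ * (Bₙ)!`. The denominator `z` of `r`
exceeds `q`, so these factors run through all `z`-th roots of unity, and one of them brings the
value within angle `π / z < π / q` of the target `tₙ₊₁`.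
-/

open Complex Real Filter FourierTransform

lemma Rat.exists_mul_eq_intCast_of_den_dvd {x : ℚ} {b : ℤ} (h : (x.den : ℤ) ∣ b) :
    ∃ k : ℤ, x * b = k := by
  obtain ⟨e, rfl⟩ := h
  exact ⟨x.num * e, by push_cast; rw [← mul_assoc, Rat.mul_den_eq_num]⟩

lemma Rat.lt_den_add_mul_natCast {x y : ℚ} {m q : ℕ} (hm : 0 < m) (hy : y.den ∣ m)
    (hx : q * m < x.den) : q < ((x + y) * m).den := by
  obtain ⟨k, hk⟩ := Rat.exists_mul_eq_intCast_of_den_dvd (b := m) (by exact_mod_cast hy)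
  have hdvd : x.den ∣ (x * m).den * m := by
    simpa [hm.ne', Rat.inv_natCast_den_of_pos hm] using Rat.mul_den_dvd (x * m) (m : ℚ)⁻¹
  push_cast at hk
  rw [add_mul, hk, Rat.add_intCast_den]
  exact Nat.lt_of_mul_lt_mul_right (hx.trans_le (Nat.le_of_dvd (by positivity) hdvd))

lemma Rat.exists_int_mul_eq_div_den_add_intCast (r : ℚ) (j : ℤ) :
    ∃ k m : ℤ, (k * r : ℚ) = j / r.den + m := by
  obtain ⟨c, d, hcd⟩ : IsCoprime r.num r.den := Int.isCoprime_iff_gcd_eq_one.2 r.reduced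
  refine ⟨j * c, -(j * d), ?_⟩
  have hcd' : (c : ℚ) * r.num + d * r.den = 1 := by exact_mod_cast hcd
  nth_rewrite 1 [← Rat.num_div_den r]
  field_simp
  push_cast
  linear_combination (j : ℚ) * hcd'

lemma Rat.den_dvd_factorial {x : ℚ} {n : ℕ} (h : x.den ≤ n) : x.den ∣ n.factorial :=
  Nat.dvd_factorial x.den_pos h

lemma fourierChar_intCast (m : ℤ) : 𝐞 m = 1 := Circle.exp_two_pi_mul_int m

lemma fourierChar_add_intCast (x : ℝ) (m : ℤ) : 𝐞 (x + m) = 𝐞 x := by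
  rw [AddChar.map_add_eq_mul, fourierChar_intCast, mul_one]

lemma fourierChar_ratCast_mul_eq {x : ℚ} {b c : ℤ} (h : (x.den : ℤ) ∣ b - c) :
    𝐞 (x * b : ℚ) = 𝐞 (x * c : ℚ) := by
  obtain ⟨k, hk⟩ := Rat.exists_mul_eq_intCast_of_den_dvd h
  have : x * b = x * c + k := by rw [← hk]; push_cast; ring
  rw [this, Rat.cast_add, Rat.cast_intCast, fourierChar_add_intCast]

lemma norm_exp_I_mul_ofReal_sub_one_lt {δ ε : ℝ} (h : |δ| < ε) (hε : ε ≤ π) :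
    ‖exp (I * δ) - 1‖ < ‖exp (I * ε) - 1‖ := by
  have hε₀ : 0 < ε := (abs_nonneg δ).trans_lt h
  simp only [norm_exp_I_mul_ofReal_sub_one, norm_mul, Real.norm_eq_abs]
  rw [abs_sin_eq_sin_abs_of_abs_le_pi, abs_sin_eq_sin_abs_of_abs_le_pi, abs_div, abs_div,
    abs_of_pos hε₀]
  · gcongr
    apply Real.sin_lt_sin_of_lt_of_le_pi_div_two <;> simp only [abs_two] <;>
      linarith [abs_nonneg δ]
  all_goals rw [abs_div, abs_two]; linarith [abs_nonneg δ, pi_pos, abs_of_pos hε₀]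

lemma exists_int_abs_two_pi_mul_div_sub_le (θ : ℝ) {z : ℝ} (hz : 0 < z) :
    ∃ j : ℤ, |2 * π * j / z - θ| ≤ π / z := by
  refine ⟨round (θ * z / (2 * π)), ?_⟩
  calc |2 * π * round (θ * z / (2 * π)) / z - θ|
      = 2 * π / z * |θ * z / (2 * π) - round (θ * z / (2 * π))| := by
        rw [← abs_of_pos (by positivity : 0 < 2 * π / z), ← abs_mul, abs_sub_comm]
        congr 1
        field_simp
    _ ≤ 2 * π / z * (1 / 2) := by gcongr; exact abs_sub_round _
    _ = π / z := by ring

lemma exists_int_norm_mul_fourierChar_sub_lt {q : ℕ} (hq : 0 < q) {r : ℚ} (hr : q < r.den)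
    (w u : Circle) :
    ∃ k : ℤ, ‖((w * 𝐞 (k * r : ℚ) : Circle) : ℂ) - u‖ < ‖exp (π * I / q) - 1‖ := by
  have hz : (0 : ℝ) < r.den := by positivity
  obtain ⟨θ, hθ⟩ := Circle.exp_surjective (w⁻¹ * u)
  obtain ⟨j, hj⟩ := exists_int_abs_two_pi_mul_div_sub_le θ hz
  obtain ⟨k, m, hk⟩ := Rat.exists_int_mul_eq_div_den_add_intCast r j
  refine ⟨k, ?_⟩
  set δ := 2 * π * j / r.den - θ
  have hkr : w * 𝐞 (k * r : ℚ) = u * Circle.exp δ := by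
    rw [hk, Rat.cast_add, Rat.cast_intCast, fourierChar_add_intCast, Real.fourierChar_apply',
      show 2 * π * ((j / r.den : ℚ) : ℝ) = θ + δ by push_cast; ring, Circle.exp_add, hθ]
    group
  have hδ : |δ| < π / q := hj.trans_lt (by gcongr)
  have hπq : π / q ≤ π := div_le_self pi_pos.le (by exact_mod_cast hq)
  calc ‖((w * 𝐞 (k * r : ℚ) : Circle) : ℂ) - u‖ = ‖exp (I * δ) - 1‖ := by
        rw [hkr, Circle.coe_mul, Circle.coe_exp, ← mul_sub_one, norm_mul, Circle.norm_coe,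
          one_mul, mul_comm]
    _ < ‖exp (I * ↑(π / q)) - 1‖ := norm_exp_I_mul_ofReal_sub_one_lt hδ hπq
    _ = ‖exp (π * I / q) - 1‖ := by push_cast; ring_nf

theorem AddChar.exists_forall_eventually_eq {ι A M : Type*} [AddMonoid A] [Monoid M]
    {l : Filter ι} [l.NeBot] (φ : ι → AddChar A M) (h : ∀ a, ∃ b, ∀ᶠ i in l, φ i a = b) :
    ∃ g : AddChar A M, ∀ a, ∀ᶠ i in l, φ i a = g a := by
  choose b hb using h
  refine ⟨{ toFun := b, map_zero_eq_one' := ?_, map_add_eq_mul' := fun x y => ?_ }, hb⟩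
  · obtain ⟨i, hi⟩ := (hb 0).exists
    rw [← hi, AddChar.map_zero_eq_one]
  · obtain ⟨i, hxy, hx, hy⟩ := ((hb (x + y)).and ((hb x).and (hb y))).exists
    rw [← hxy, ← hx, ← hy, AddChar.map_add_eq_mul]

lemma exists_addChar_rat_eq_fourierChar_of_dvd_sub (L : ℕ → ℕ) (a : ℕ → ℤ)
    (hL : ∀ d, 0 < d → ∃ n, d ∣ L n) (ha : ∀ m n, m ≤ n → (L m : ℤ) ∣ a n - a m) :
    ∃ g : AddChar ℚ Circle, ∀ x m, x.den ∣ L m → g x = 𝐞 (x * a m : ℚ) := by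
  let φ (n : ℕ) : AddChar ℚ Circle :=
    𝐞.compAddMonoidHom ((Rat.castHom ℝ).toAddMonoidHom.comp (AddMonoidHom.mulRight (a n : ℚ)))
  have hφ (x : ℚ) (m n : ℕ) (hx : x.den ∣ L m) (hmn : m ≤ n) : φ n x = 𝐞 (x * a m : ℚ) :=
    fourierChar_ratCast_mul_eq ((Int.natCast_dvd_natCast.2 hx).trans (ha m n hmn))
  obtain ⟨g, hg⟩ := AddChar.exists_forall_eventually_eq φ fun x => by
    obtain ⟨m, hm⟩ := hL x.den x.den_pos
    exact ⟨_, eventually_atTop.2 ⟨m, fun n => hφ x m n hm⟩⟩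
  refine ⟨g, fun x m hm => ?_⟩
  obtain ⟨n, hn, hgn⟩ := ((eventually_ge_atTop m).and (hg x)).exists
  rw [← hgn, hφ x m n hm hn]

lemma exists_seq_dvd_sub_and_forall {L : ℕ → ℕ} (hL : ∀ n, L n ∣ L (n + 1))
    (P : ℕ → ℤ → Prop) (hP : ∀ n v, ∃ k : ℤ, P n (v + L n * k)) :
    ∃ a : ℕ → ℤ, (∀ m n, m ≤ n → (L m : ℤ) ∣ a n - a m) ∧ ∀ n, P n (a (n + 1)) := by
  choose k hk using hP
  let a : ℕ → ℤ := fun n => Nat.rec 0 (fun m v => v + L m * k m v) n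
  refine ⟨a, fun m n hmn => ?_, fun n => hk n (a n)⟩
  induction n, hmn using Nat.le_induction with
  | base => simp
  | succ n hmn ih =>
    have hLmn : (L m : ℤ) ∣ L n :=
      Int.natCast_dvd_natCast.2 (Nat.rel_of_forall_rel_succ_of_le (· ∣ ·) hL hmn)
    rw [show a (n + 1) - a m = a n - a m + L n * k n (a n) by simp only [a]; ring]
    exact dvd_add ih (dvd_mul_of_dvd_left hLmn _)

theorem exists_addChar_rat_norm_sub_lt {q : ℕ} (hq : 0 < q) {L : ℕ → ℕ}
    (hL : ∀ n, L n ∣ L (n + 1)) (hcof : ∀ d, 0 < d → ∃ n, d ∣ L n) {x : ℕ → ℚ}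
    (hxL : ∀ n, (x (n + 1)).den ∣ L (n + 1)) (hxq : ∀ n, q < (x (n + 1) * L n).den)
    (u : ℕ → Circle) :
    ∃ g : AddChar ℚ Circle, (∀ k : ℤ, g k = 1) ∧
      ∀ n, ‖(g (x (n + 1)) : ℂ) - u (n + 1)‖ < ‖exp (π * I / q) - 1‖ := by
  obtain ⟨a, ha, hau⟩ := exists_seq_dvd_sub_and_forall hL
    (fun n v => ‖(𝐞 (x (n + 1) * v : ℚ) : ℂ) - u (n + 1)‖ < ‖exp (π * I / q) - 1‖)
    fun n v => by
      obtain ⟨k, hk⟩ := exists_int_norm_mul_fourierChar_sub_lt hq (hxq n)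
        (𝐞 (x (n + 1) * v : ℚ)) (u (n + 1))
      refine ⟨k, ?_⟩
      rw [← AddChar.map_add_eq_mul] at hk
      convert hk using 4
      push_cast
      ring_nf
  obtain ⟨g, hg⟩ := exists_addChar_rat_eq_fourierChar_of_dvd_sub L a hcof ha
  refine ⟨g, fun k => ?_, fun n => ?_⟩
  · rw [hg _ 0 (by simp), ← Int.cast_mul, Rat.cast_intCast, fourierChar_intCast]
  · rw [hg _ _ (hxL n)]
    exact hau n

theorem stmt10 (q : ℕ) (hq : 2 < q) (lam chi : ℕ → ℚ) (B : ℕ → ℕ)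
    (hB0 : B 0 = (chi 1).den)
    (hBn : ∀ n ≥ 1, B n = 2 * (((Finset.Icc 1 n).sup fun i => (lam i).den) ⊔
      ((Finset.Icc 1 (n + 1)).sup fun j => (chi j).den)))
    (hden : ∀ n : ℕ, q * (B n).factorial < (lam (n + 1)).den) :
    ∀ t : ℕ → ℂ, (∀ n, ‖t n‖ = 1) →
      ∃ g : AddChar ℚ Circle, (∀ k : ℤ, g (k : ℚ) = 1) ∧
        ∀ n ≥ 1, ‖(g (lam n + chi n) : ℂ) - t n‖ <
          ‖Complex.exp (Real.pi * Complex.I / q) - 1‖ := by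
  intro t ht
  have hlamB (n : ℕ) (hn : 1 ≤ n) : (lam n).den ≤ B n := by
    rw [hBn n hn]
    exact (le_sup_of_le_left (Finset.le_sup (f := fun i => (lam i).den)
      (Finset.mem_Icc.2 ⟨hn, le_rfl⟩))).trans (Nat.le_mul_of_pos_left _ two_pos)
  have hchiB (n : ℕ) : (chi (n + 1)).den ≤ B n := by
    rcases n.eq_zero_or_pos with rfl | hn
    · exact hB0.ge
    rw [hBn n hn]
    exact (le_sup_of_le_right (Finset.le_sup (f := fun j => (chi j).den)
      (Finset.mem_Icc.2 ⟨by omega, le_rfl⟩))).trans (Nat.le_mul_of_pos_left _ two_pos)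
  have hB : StrictMono B := strictMono_nat_of_lt_succ fun n =>
    calc B n ≤ q * (B n).factorial :=
          (Nat.self_le_factorial _).trans (Nat.le_mul_of_pos_left _ (by omega))
      _ < (lam (n + 1)).den := hden n
      _ ≤ B (n + 1) := hlamB _ n.succ_pos
  obtain ⟨g, hg_int, hg⟩ := exists_addChar_rat_norm_sub_lt (by omega : 0 < q)
    (L := fun n => (B n).factorial) (x := fun n => lam n + chi n)
    (fun n => Nat.factorial_dvd_factorial (hB.monotone n.le_succ))
    (fun d hd => ⟨d, Nat.dvd_factorial hd (hB.id_le d)⟩)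
    (fun n => (Rat.add_den_dvd_lcm _ _).trans <| Nat.lcm_dvd
      (Rat.den_dvd_factorial (hlamB _ n.succ_pos))
      (Rat.den_dvd_factorial ((hchiB n).trans (hB.monotone n.le_succ))))
    (fun n => Rat.lt_den_add_mul_natCast (Nat.factorial_pos _)
      (Rat.den_dvd_factorial (hchiB n)) (hden n))
    (fun n => ⟨t n, mem_sphere_zero_iff_norm.2 (ht n)⟩)
  refine ⟨g, hg_int, fun n hn => ?_⟩
  obtain ⟨m, rfl⟩ := Nat.exists_eq_add_of_le' hn
  exact hg m
end

section
/- Let Λ = ⨁_{n≥1} Λ_n be a direct sum of abelian groups with projections p_n, and let (e_n)_{n≥1} ⊆ Λ be a sequence such that for each n: p_n(e_n) has finite order M_n ≥ q (for a fixed integer q ≥ 2), p_n(e_n) generates a cyclic subgroup on which some character achieves any M_n-th root of unity (which holds automatically since Λ_n can be paired with its character group, 𝕋 being divisible), and p_k(e_n) = 0 for all k > n. Then (e_n) is weak ε_q-Kronecker in Λ with ε_q = |e^{iπ/q} − 1|: for every sequence (t_n) in 𝕋 there is a homomorphism g : Λ → 𝕋 with |g(e_n) − t_n| ≤ ε_q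 for all n. -/
/-!
The character `g` is built one coordinate at a time. Since `e n` has no components beyond `n`,
`g (e n) = (∏ k < n, g_k (e n k)) * g_n (e n n)`, and the first factor is already fixed when
`g_n` is chosen. As the circle is divisible, a character of `Λ n` can send `e n n`, of order `M n`,
to any `M n`-th root of unity, and every point of the circle lies within
`|exp (iπ / M n) - 1| ≤ |exp (iπ / q) - 1|` of such a root.
-/

open DirectSum

theorem Nat.exists_pi_forall_of_forall_fin_exists {β : ℕ → Type*}
    (P : ∀ n, (∀ k : Fin n, β k) → β n → Prop) (h : ∀ n prev, ∃ b, P n prev b) :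
    ∃ f : ∀ n, β n, ∀ n, P n (fun k => f k) (f n) := by
  choose c hc using h
  let f : ∀ n, β n := Nat.strongRec fun n prev => c n fun k => prev k k.isLt
  refine ⟨f, fun n => ?_⟩
  rw [show f n = c n (fun k => f k) from Nat.strongRec_eq _ n]
  exact hc _ _

/-- `zmultiples x ≅ ZMod (addOrderOf x)`, and a divisible group is injective (Baer). -/
theorem AddMonoidHom.exists_apply_eq_of_divisible {A Q : Type*} [AddCommGroup A]
    [AddCommGroup Q] [DivisibleBy Q ℤ] (x : A) (y : Q) (hy : addOrderOf x • y = 0) :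
    ∃ f : A →+ Q, f x = y := by
  set n := addOrderOf x
  let ι : ZMod n →+ A := ZMod.lift n ⟨zmultiplesHom A x, by simp [n, addOrderOf_nsmul_eq_zero]⟩
  let φ : ZMod n →+ Q := ZMod.lift n ⟨zmultiplesHom Q y, by simpa using hy⟩
  have hι : Function.Injective ι := by
    refine (ZMod.lift_injective n).2 fun m hm => ?_
    rw [ZMod.intCast_zmod_eq_zero_iff_dvd]
    exact addOrderOf_dvd_iff_zsmul_eq_zero.2 (by simpa using hm)
  obtain ⟨f, hf⟩ := (Module.Baer.of_divisible Q).extension_property_addMonoidHom ι hι φ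
  refine ⟨f, ?_⟩
  have h1 := DFunLike.congr_fun hf ((1 : ℤ) : ZMod n)
  rwa [AddMonoidHom.comp_apply, ZMod.lift_coe, ZMod.lift_coe, zmultiplesHom_apply,
    zmultiplesHom_apply, one_zsmul, one_zsmul] at h1

noncomputable instance : DivisibleBy (Additive Circle) ℤ :=
  Circle.exp_surjective.divisibleBy Circle.expHom fun a n => map_zsmul Circle.expHom n a

theorem AddChar.exists_apply_eq_of_pow_addOrderOf {A : Type*} [AddCommGroup A] (x : A)
    (ζ : Circle) (hζ : ζ ^ addOrderOf x = 1) : ∃ χ : AddChar A Circle, χ x = ζ := by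
  obtain ⟨f, hf⟩ := AddMonoidHom.exists_apply_eq_of_divisible x (Additive.ofMul ζ)
    (by simpa [← ofMul_pow] using congrArg Additive.ofMul hζ)
  exact ⟨AddChar.toAddMonoidHomEquiv.symm f, by simp [hf]⟩

section Chord

open Complex Real

theorem norm_exp_ofReal_mul_I_sub_one_eq_sqrt (r : ℝ) :
    ‖Complex.exp (r * I) - 1‖ = √(2 - 2 * Real.cos r) := by
  rw [Complex.norm_def, Complex.normSq_apply]
  congr 1
  simp only [sub_re, sub_im, one_re, one_im, exp_ofReal_mul_I_re, exp_ofReal_mul_I_im]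
  nlinarith [Real.sin_sq_add_cos_sq r]

theorem norm_exp_ofReal_mul_I_sub_one_le {s r : ℝ} (hsr : |s| ≤ r) (hr : r ≤ π) :
    ‖Complex.exp (s * I) - 1‖ ≤ ‖Complex.exp (r * I) - 1‖ := by
  rw [norm_exp_ofReal_mul_I_sub_one_eq_sqrt, norm_exp_ofReal_mul_I_sub_one_eq_sqrt,
    ← Real.cos_abs s]
  gcongr
  exact Real.cos_le_cos_of_nonneg_of_le_pi (abs_nonneg s) hr hsr

theorem norm_exp_pi_mul_I_div_sub_one_le {m n : ℕ} (hm : 0 < m) (hmn : m ≤ n) :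
    ‖Complex.exp (π * I / n) - 1‖ ≤ ‖Complex.exp (π * I / m) - 1‖ := by
  have hdiv (k : ℕ) : (π : ℂ) * I / k = ((π / k : ℝ) : ℂ) * I := by push_cast; ring
  rw [hdiv, hdiv]
  refine norm_exp_ofReal_mul_I_sub_one_le ?_ (div_le_self pi_pos.le (by exact_mod_cast hm))
  rw [abs_of_nonneg (by positivity)]
  gcongr

/-- For `M = 0` the bound is `‖exp 0 - 1‖ = 0`, and `ζ = z` is the only choice. -/
theorem Circle.exists_pow_eq_one_norm_sub_le (z : Circle) (M : ℕ) :
    ∃ ζ : Circle, ζ ^ M = 1 ∧ ‖(ζ : ℂ) - z‖ ≤ ‖Complex.exp (π * I / M) - 1‖ := by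
  rcases M.eq_zero_or_pos with rfl | hM
  · exact ⟨z, pow_zero z, by simp⟩
  have hM' : (0 : ℝ) < M := by exact_mod_cast hM
  set θ := arg z
  set s := 2 * π * round (θ * M / (2 * π)) / M
  refine ⟨Circle.exp s, ?_, ?_⟩
  · rw [← Circle.exp_natCast_mul, show (M : ℝ) * s = 2 * π * round (θ * M / (2 * π)) by
      simp only [s]; field_simp]
    exact Circle.exp_two_pi_mul_int _
  have hsθ : |s - θ| ≤ π / M := by
    have hround := abs_sub_round (θ * M / (2 * π))
    have : s - θ = -(2 * π / M) * (θ * M / (2 * π) - round (θ * M / (2 * π))) := by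
      simp only [s]; field_simp; ring
    rw [this, abs_mul, abs_neg, abs_of_pos (by positivity)]
    calc 2 * π / M * _ ≤ 2 * π / M * (1 / 2) := by gcongr
      _ = π / M := by ring
  have hz : (z : ℂ) = Complex.exp (θ * I) := by rw [← Circle.coe_exp, Circle.exp_arg]
  have hdiff : (Circle.exp s : ℂ) - z =
      Complex.exp (θ * I) * (Complex.exp ((s - θ : ℝ) * I) - 1) := by
    rw [hz, Circle.coe_exp, mul_sub, mul_one, ← Complex.exp_add]
    congr 2
    push_cast
    ring
  rw [hdiff, norm_mul, norm_exp_ofReal_mul_I, one_mul,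
    show (π : ℂ) * I / M = ((π / M : ℝ) : ℂ) * I by push_cast; ring]
  exact norm_exp_ofReal_mul_I_sub_one_le hsθ (div_le_self pi_pos.le (by exact_mod_cast hM))

theorem AddChar.exists_norm_mul_apply_sub_le {A : Type*} [AddCommGroup A] (x : A)
    (c w : Circle) : ∃ χ : AddChar A Circle,
      ‖((c * χ x : Circle) : ℂ) - w‖ ≤ ‖Complex.exp (π * I / addOrderOf x) - 1‖ := by
  obtain ⟨ζ, hζ, hζw⟩ := Circle.exists_pow_eq_one_norm_sub_le (c⁻¹ * w) (addOrderOf x)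
  obtain ⟨χ, hχ⟩ := AddChar.exists_apply_eq_of_pow_addOrderOf x ζ hζ
  refine ⟨χ, ?_⟩
  have hc : ((c * ζ : Circle) : ℂ) - w = c * ((ζ : ℂ) - (c⁻¹ * w : Circle)) := by
    push_cast
    field_simp [Circle.coe_ne_zero c]
  rwa [hχ, hc, norm_mul, Circle.norm_coe, one_mul]

end Chord

theorem AddChar.directSum_apply_eq_prod {ι : Type*} [DecidableEq ι] {β : ι → Type*}
    [∀ i, AddCommGroup (β i)] {M : Type*} [CommMonoid M] (χ : ∀ i, AddChar (β i) M)
    {x : ⨁ i, β i} {s : Finset ι} (hx : ∀ i ∉ s, x i = 0) :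
    AddChar.directSum χ x = ∏ i ∈ s, χ i (x i) := by
  classical
  change Additive.toMul (DirectSum.toAddMonoid (fun i => (χ i).toAddMonoidHomEquiv) x) = _
  rw [DirectSum.toAddMonoid, DFinsupp.liftAddHom_apply, DFinsupp.sumAddHom_apply,
    DFinsupp.sum_of_support_subset (s := s) ?_ (fun i _ => map_zero _), toMul_sum]
  · rfl
  · exact fun i hi => by_contra fun his => DFinsupp.mem_support_iff.1 hi (hx i his)

theorem stmt12 {Λ : ℕ → Type*} [∀ n, AddCommGroup (Λ n)]
    (q : ℕ) (hq : 2 ≤ q) (e : ℕ → ⨁ n, Λ n) (M : ℕ → ℕ)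
    (horder : ∀ n, addOrderOf (e n n) = M n) (hM : ∀ n, q ≤ M n)
    (htri : ∀ n k, n < k → e n k = 0) :
    ∀ t : ℕ → Circle, ∃ g : AddChar (⨁ n, Λ n) Circle,
      ∀ n, ‖(g (e n) : ℂ) - (t n : ℂ)‖ ≤
        ‖Complex.exp (Real.pi * Complex.I / q) - 1‖ := by
  intro t
  obtain ⟨χ, hχ⟩ := Nat.exists_pi_forall_of_forall_fin_exists
    (fun n (prev : ∀ k : Fin n, AddChar (Λ k) Circle) (χn : AddChar (Λ n) Circle) =>
      ‖(((∏ k : Fin n, prev k (e n k)) * χn (e n n) : Circle) : ℂ) - t n‖ ≤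
        ‖Complex.exp (Real.pi * Complex.I / M n) - 1‖)
    fun n prev => horder n ▸
      AddChar.exists_norm_mul_apply_sub_le (e n n) (∏ k : Fin n, prev k (e n k)) (t n)
  refine ⟨AddChar.directSum χ, fun n => ?_⟩
  rw [AddChar.directSum_apply_eq_prod χ (s := Finset.range (n + 1))
      fun k hk => htri n k (by simpa using hk),
    Finset.prod_range_succ, ← Fin.prod_univ_eq_prod_range]
  exact (hχ n).trans (norm_exp_pi_mul_I_div_sub_one_le (by omega) (hM n))
end
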